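/- Any two nonprincipal ultrafilters on ℕ that are pseudo-P_{𝔟⁺} points (where 𝔟⁺ is the successor cardinal of the bounding number 𝔟) are nearly coherent. -/

import Mathlib

open Cardinal Set Filter

/-- A nonprincipal ultrafilter on ℕ: one that is not of the form `pure n`. -/
def Nonprincipal (U : Ultrafilter ℕ) : Prop := ∀ n : ℕ, U ≠ pure n

/-- `C` is cofinal in the ultrapower `U-prod ω` with respect to `≤_U`. -/
def UCofinal (U : Ultrafilter ℕ) (C : Set (ℕ → ℕ)) : Prop :=
  ∀ f : ℕ → ℕ, ∃ g ∈ C, {n : ℕ | f n ≤ g n} ∈ U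

/-- The cofinality of the ultrapower `U-prod ω`: the least cardinality of a
set of functions cofinal with respect to `≤_U`. -/
noncomputable def cfUProd (U : Ultrafilter ℕ) : Cardinal :=
  sInf {c : Cardinal | ∃ C : Set (ℕ → ℕ), UCofinal U C ∧ c = #C}

/-- The bounding number 𝔟. -/
noncomputable def boundingNumber : Cardinal :=
  sInf {c : Cardinal | ∃ B : Set (ℕ → ℕ),
    (∀ f : ℕ → ℕ, ∃ g ∈ B, {n : ℕ | f n ≤ g n}.Infinite) ∧ c = #B}

/-- The dominating number 𝔡. -/
noncomputable def dominatingNumber : Cardinal :=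
  sInf {c : Cardinal | ∃ D : Set (ℕ → ℕ),
    (∀ f : ℕ → ℕ, ∃ g ∈ D, {n : ℕ | ¬ f n ≤ g n}.Finite) ∧ c = #D}

/-- The splitting number 𝔰. -/
noncomputable def splittingNumber : Cardinal :=
  sInf {c : Cardinal | ∃ S : Set (Set ℕ),
    (∀ X : Set ℕ, X.Infinite → ∃ Y ∈ S, (X ∩ Y).Infinite ∧ (X \ Y).Infinite) ∧ c = #S}

/-- A family of infinite subsets of ℕ is groupwise dense if it is closed under
infinite subsets and finite modifications and, for every partition of ℕ into
consecutive finite intervals (given by a strictly increasing sequence starting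
at 0), the union of some infinitely many of the intervals is in the family. -/
def GroupwiseDense (G : Set (Set ℕ)) : Prop :=
  (∀ X ∈ G, X.Infinite) ∧
  (∀ X ∈ G, ∀ Y : Set ℕ, Y ⊆ X → Y.Infinite → Y ∈ G) ∧
  (∀ X ∈ G, ∀ Y : Set ℕ, (symmDiff X Y).Finite → Y ∈ G) ∧
  (∀ a : ℕ → ℕ, a 0 = 0 → StrictMono a →
    ∃ K : Set ℕ, K.Infinite ∧ (⋃ k ∈ K, Set.Ico (a k) (a (k + 1))) ∈ G)

/-- The groupwise density number 𝔤. -/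
noncomputable def groupwiseDensityNumber : Cardinal :=
  sInf {c : Cardinal | ∃ 𝒢 : Set (Set (Set ℕ)),
    (∀ G ∈ 𝒢, GroupwiseDense G) ∧ ⋂₀ 𝒢 = ∅ ∧ c = #𝒢}

/-- `U` is a pseudo-P_κ point. -/
def PseudoPPoint (U : Ultrafilter ℕ) (κ : Cardinal) : Prop :=
  ∀ F : Set (Set ℕ), (∀ A ∈ F, A ∈ U) → #F < κ →
    ∃ A : Set ℕ, A.Infinite ∧ ∀ B ∈ F, (A \ B).Finite

/-- A finite-to-one function on ℕ. -/
def FinToOne (f : ℕ → ℕ) : Prop := ∀ n : ℕ, (f ⁻¹' {n}).Finite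

/-- Two ultrafilters are nearly coherent if they have a common image under
finite-to-one maps. -/
def NearlyCoherent (U U' : Ultrafilter ℕ) : Prop :=
  ∃ f f' : ℕ → ℕ, FinToOne f ∧ FinToOne f' ∧
    Ultrafilter.map f U = Ultrafilter.map f' U'

/-- `nuX X n` is the least element of `X` greater than `n`. -/
noncomputable def nuX (X : Set ℕ) (n : ℕ) : ℕ := sInf {m : ℕ | m ∈ X ∧ n < m}

/-!
Suppose `U` and `U'` are not nearly coherent and let `B` be an unbounded family of size `𝔟`.
For `g ∈ B` split `ℕ` into the intervals `[h^[k] 0, h^[k+1] 0)` for a monotone `h > g, id`.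
The block map is finite-to-one, so it sends `U` and `U'` to different ultrafilters, giving a
union of blocks `A_g ∈ U` with `A_gᶜ ∈ U'`. The pseudo-P_{𝔟⁺} property yields infinite `X`, `Y`
with `X ⊆* A_g` and `Y ⊆* A_gᶜ` for all `g ∈ B`. Let `p n` be the larger of the next elements
of `X` and of `Y` after `n`. Eventually these two lie in different blocks, so `p` advances at
least one block, and `p ∘ p` eventually dominates every `g ∈ B`, contradicting unboundedness.
-/

lemma exists_unbounded_family_card_eq_boundingNumber :
    ∃ B : Set (ℕ → ℕ), (∀ f : ℕ → ℕ, ∃ g ∈ B, {n : ℕ | f n ≤ g n}.Infinite) ∧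
      boundingNumber = #B := by
  have hne : {c : Cardinal | ∃ B : Set (ℕ → ℕ),
      (∀ f : ℕ → ℕ, ∃ g ∈ B, {n : ℕ | f n ≤ g n}.Infinite) ∧ c = #B}.Nonempty :=
    ⟨_, univ, fun f => ⟨f, mem_univ f, by simpa using infinite_univ (α := ℕ)⟩, rfl⟩
  exact csInf_mem hne

lemma PseudoPPoint.exists_infinite_finite_sdiff {U : Ultrafilter ℕ} {κ : Cardinal}
    (hU : PseudoPPoint U κ) {ι : Type} (A : ι → Set ℕ) (hA : ∀ i, A i ∈ U) (hι : #ι < κ) :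
    ∃ X : Set ℕ, X.Infinite ∧ ∀ i, (X \ A i).Finite := by
  obtain ⟨X, hX, hXA⟩ := hU (range A) (forall_mem_range.2 hA) (mk_range_le.trans_lt hι)
  exact ⟨X, hX, fun i => hXA _ (mem_range_self i)⟩

lemma exists_preimage_mem_compl_mem_of_not_nearlyCoherent {U U' : Ultrafilter ℕ}
    (hUU' : ¬ NearlyCoherent U U') {f : ℕ → ℕ} (hf : FinToOne f) :
    ∃ s : Set ℕ, f ⁻¹' s ∈ U ∧ (f ⁻¹' s)ᶜ ∈ U' := by
  by_contra! h
  refine hUU' ⟨f, f, hf, hf, Ultrafilter.eq_of_le fun s hs => ?_⟩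
  rw [Ultrafilter.mem_coe, Ultrafilter.mem_map] at hs ⊢
  by_contra hs'
  exact h sᶜ (Ultrafilter.compl_mem_iff_notMem.2 hs') (by simpa using hs)

section Blocks

/-- The blocks of `h` are the intervals `[blockStart h k, blockStart h (k + 1))`. -/
noncomputable def blockStart (h : ℕ → ℕ) (k : ℕ) : ℕ := h^[k] 0

noncomputable def blockIndex (h : ℕ → ℕ) (n : ℕ) : ℕ := sInf {k | n < blockStart h (k + 1)}

variable {h : ℕ → ℕ}

lemma blockStart_succ (k : ℕ) : blockStart h (k + 1) = h (blockStart h k) :=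
  Function.iterate_succ_apply' h k 0

lemma blockStart_strictMono (hh : ∀ n, n < h n) : StrictMono (blockStart h) :=
  strictMono_nat_of_lt_succ fun k => blockStart_succ k ▸ hh _

lemma lt_blockStart_blockIndex_succ (hh : ∀ n, n < h n) (n : ℕ) :
    n < blockStart h (blockIndex h n + 1) :=
  Nat.sInf_mem (s := {k | n < blockStart h (k + 1)})
    ⟨n, (Nat.lt_succ_self n).trans_le (blockStart_strictMono hh).le_apply⟩

lemma blockIndex_le_of_lt_blockStart {n k : ℕ} (hnk : n < blockStart h (k + 1)) :
    blockIndex h n ≤ k :=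
  Nat.sInf_le hnk

lemma blockStart_blockIndex_le (n : ℕ) : blockStart h (blockIndex h n) ≤ n := by
  rcases hn : blockIndex h n with _ | k
  · exact Nat.zero_le n
  · by_contra! hlt
    have := blockIndex_le_of_lt_blockStart hlt
    omega

lemma blockIndex_mono (hh : ∀ n, n < h n) : Monotone (blockIndex h) := fun _ n hmn =>
  blockIndex_le_of_lt_blockStart (hmn.trans_lt (lt_blockStart_blockIndex_succ hh n))

lemma finToOne_blockIndex (hh : ∀ n, n < h n) : FinToOne (blockIndex h) := fun k =>
  (finite_Iio (blockStart h (k + 1))).subset fun n hn =>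
    (congrArg (fun j => blockStart h (j + 1)) hn) ▸ lt_blockStart_blockIndex_succ hh n

lemma blockIndex_lt_blockIndex_max (hh : ∀ n, n < h n) {n a b : ℕ} (ha : n ≤ a) (hb : n ≤ b)
    (hab : blockIndex h a ≠ blockIndex h b) : blockIndex h n < blockIndex h (max a b) := by
  have hia := blockIndex_mono hh ha
  have hib := blockIndex_mono hh hb
  rw [(blockIndex_mono hh).map_max]
  omega

lemma apply_le_of_blockIndex_add_two_le (hh : ∀ n, n < h n) (hmono : Monotone h) {n m : ℕ}
    (hnm : blockIndex h n + 2 ≤ blockIndex h m) : h n ≤ m :=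
  calc h n ≤ h (blockStart h (blockIndex h n + 1)) :=
        hmono (lt_blockStart_blockIndex_succ hh n).le
    _ = blockStart h (blockIndex h n + 2) := (blockStart_succ _).symm
    _ ≤ blockStart h (blockIndex h m) := (blockStart_strictMono hh).monotone hnm
    _ ≤ m := blockStart_blockIndex_le m

end Blocks

lemma nuX_mem_lt {X : Set ℕ} (hX : X.Infinite) (n : ℕ) : nuX X n ∈ X ∧ n < nuX X n :=
  Nat.sInf_mem (hX.exists_gt n)

noncomputable def nextPair (X Y : Set ℕ) (n : ℕ) : ℕ := max (nuX X n) (nuX Y n)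

lemma lt_nextPair {X Y : Set ℕ} (hX : X.Infinite) (n : ℕ) : n < nextPair X Y n :=
  (nuX_mem_lt hX n).2.trans_le (le_max_left _ _)

lemma eventually_le_nextPair_nextPair {h : ℕ → ℕ} (hh : ∀ n, n < h n) (hmono : Monotone h)
    {X Y s : Set ℕ} (hX : X.Infinite) (hY : Y.Infinite)
    (hXA : (X \ blockIndex h ⁻¹' s).Finite) (hYA : (Y \ (blockIndex h ⁻¹' s)ᶜ).Finite) :
    ∀ᶠ n in atTop, h n ≤ nextPair X Y (nextPair X Y n) := by
  have hsep : ∀ᶠ m in atTop, (m ∈ X → blockIndex h m ∈ s) ∧ (m ∈ Y → blockIndex h m ∉ s) := by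
    rw [← Nat.cofinite_eq_atTop]
    exact (eventually_cofinite.2 (hXA.subset fun _ hm => Classical.not_imp.1 hm)).and
      (eventually_cofinite.2 (hYA.subset fun _ hm => Classical.not_imp.1 hm))
  obtain ⟨N, hN⟩ := eventually_atTop.1 hsep
  have step : ∀ n, N ≤ n → blockIndex h n < blockIndex h (nextPair X Y n) := by
    intro n hn
    obtain ⟨haX, hna⟩ := nuX_mem_lt hX n
    obtain ⟨hbY, hnb⟩ := nuX_mem_lt hY n
    refine blockIndex_lt_blockIndex_max hh hna.le hnb.le fun hab => ?_
    exact (hN _ (hn.trans hnb.le)).2 hbY (hab ▸ (hN _ (hn.trans hna.le)).1 haX)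
  refine eventually_atTop.2 ⟨N, fun n hn => apply_le_of_blockIndex_add_two_le hh hmono ?_⟩
  have h1 := step n hn
  have h2 := step (nextPair X Y n) (hn.trans (lt_nextPair hX n).le)
  omega

def majorant (g : ℕ → ℕ) (n : ℕ) : ℕ := ∑ i ∈ Finset.range (n + 1), (g i + 1)

lemma monotone_majorant (g : ℕ → ℕ) : Monotone (majorant g) := fun _ _ hmn =>
  Finset.sum_le_sum_of_subset (Finset.range_subset_range.2 (by omega))

lemma lt_majorant (g : ℕ → ℕ) (n : ℕ) : n < majorant g n :=
  calc n < ∑ _i ∈ Finset.range (n + 1), 1 := by simp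
    _ ≤ majorant g n := Finset.sum_le_sum fun i _ => by omega

lemma apply_lt_majorant (g : ℕ → ℕ) (n : ℕ) : g n < majorant g n :=
  Nat.lt_of_succ_le (Finset.single_le_sum (f := fun i => g i + 1) (fun _ _ => Nat.zero_le _)
    (Finset.self_mem_range_succ n))

theorem stmt_6_general (U U' : Ultrafilter ℕ)
    (hP : PseudoPPoint U (Order.succ boundingNumber))
    (hP' : PseudoPPoint U' (Order.succ boundingNumber)) :
    NearlyCoherent U U' := by
  by_contra hUU'
  obtain ⟨B, hB, hBcard⟩ := exists_unbounded_family_card_eq_boundingNumber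
  have hBlt : #B < Order.succ boundingNumber := hBcard ▸ Order.lt_succ _
  have hsplit (g : B) := exists_preimage_mem_compl_mem_of_not_nearlyCoherent hUU'
    (finToOne_blockIndex (lt_majorant g))
  choose s hsU hsU' using hsplit
  obtain ⟨X, hX, hXA⟩ := hP.exists_infinite_finite_sdiff _ hsU hBlt
  obtain ⟨Y, hY, hYA⟩ := hP'.exists_infinite_finite_sdiff _ hsU' hBlt
  obtain ⟨g, hgB, hg⟩ := hB fun n => nextPair X Y (nextPair X Y n)
  have hdom := eventually_le_nextPair_nextPair (lt_majorant g) (monotone_majorant g) hX hY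
    (hXA ⟨g, hgB⟩) (hYA ⟨g, hgB⟩)
  obtain ⟨n, hn, hgn⟩ := (hdom.and_frequently (Nat.frequently_atTop_iff_infinite.2 hg)).exists
  exact (apply_lt_majorant g n).not_ge (hn.trans hgn)

/-- Any two pseudo-P_{𝔟⁺} points are nearly coherent. -/
theorem stmt_6 (U U' : Ultrafilter ℕ) (hU : Nonprincipal U) (hU' : Nonprincipal U')
    (hP : PseudoPPoint U (Order.succ boundingNumber))
    (hP' : PseudoPPoint U' (Order.succ boundingNumber)) :
    NearlyCoherent U U' :=
  stmt_6_general U U' hP hP'
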